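/- Let M be a 3-connected matroid such that |E(M)| ≥ 13, let F = (e_1, e_2, e_3, e_4, e_5) be a maximal fan of M with {e_1, e_2, e_3} a triangle, and suppose M has no detachable pair. Then there exists z ∈ E(M) − F such that {e_1, e_3, e_5, z} is a cocircuit of M. -/

import Mathlib

/-!
Write `A = {e₀, e₁, e₂}` and `B = {e₂, e₃, e₄}` for the triangles, `T = {e₁, e₂, e₃}` for the
triad and `F` for the fan. As `{e₀, e₄}` is not detachable, `N = M \ {e₀, e₄}` has a 1- or
2-separation. Both `e₀` and `e₄` lie in the closure of any set containing `T`, so a set `Z ⊇ T`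
has `λ_N(Z) = λ_M(Z ∪ {e₀, e₄})`; by 3-connectivity of `M` no side of the separation contains
`T`. Moving the missing element of `T` to the side holding the other two does not increase `λ_N`
(as `T` is a cocircuit), which shows that the opposite side `Q` has at most two elements and meets
`T` in exactly one. Then `Q` is independent, and `λ_N(Q) < |Q|` yields a cocircuit
`D ⊆ Q ∪ {e₀, e₄}` of `M`. Orthogonality with `A` and `B` together with `|D| ≥ 3` leaves three
possibilities: a triad `{e₃, e₄, w}` or `{w, e₀, e₁}` with `w ∉ F`, which would extend the
maximal fan, or `D = {e₀, e₂, e₄, z}`. In the last case `z ∉ F` because `T` is the only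
cocircuit inside `F`: as `r(F) ≤ 3` and `λ(F) ≥ 2`, the set `E − F` has corank at most one.
-/

open Matroid Set

namespace DetPairs

variable {α : Type*}

/-- The rank of a set in a matroid: the maximum size of an independent subset
(as an integer, for convenient arithmetic). -/
noncomputable def r (M : Matroid α) (X : Set α) : ℤ :=
  ((sSup (Set.ncard '' {I | M.Indep I ∧ I ⊆ X}) : ℕ) : ℤ)

/-- The connectivity function `λ_M(X) = r(X) + r(E − X) − r(M)`. -/
noncomputable def lam (M : Matroid α) (X : Set α) : ℤ :=
  r M X + r M (M.E \ X) - r M M.E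

/-- Local connectivity `⊓(X,Y) = r(X) + r(Y) − r(X ∪ Y)`. -/
noncomputable def localConn (M : Matroid α) (X Y : Set α) : ℤ :=
  r M X + r M Y - r M (X ∪ Y)

/-- A circuit: a minimal dependent set. -/
def Circuit (M : Matroid α) (C : Set α) : Prop :=
  C ⊆ M.E ∧ ¬ M.Indep C ∧ ∀ D, D ⊂ C → M.Indep D

/-- A cocircuit: a circuit of the dual. -/
def Cocircuit (M : Matroid α) (C : Set α) : Prop := Circuit M✶ C

/-- A triangle: a 3-element circuit. -/
def Triangle (M : Matroid α) (T : Set α) : Prop := Circuit M T ∧ T.ncard = 3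

/-- A triad: a 3-element cocircuit. -/
def Triad (M : Matroid α) (T : Set α) : Prop := Cocircuit M T ∧ T.ncard = 3

/-- A quad: a 4-element set that is both a circuit and a cocircuit. -/
def Quad (M : Matroid α) (Q : Set α) : Prop :=
  Circuit M Q ∧ Cocircuit M Q ∧ Q.ncard = 4

/-- Deletion of a set of elements. -/
def Del (M : Matroid α) (D : Set α) : Matroid α := M ↾ (M.E \ D)

/-- Contraction of a set of elements. -/
def Con (M : Matroid α) (C : Set α) : Matroid α := (M✶ ↾ (M.E \ C))✶

/-- `M` is 3-connected: it has no `k`-separation for `k = 1, 2`, where a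
`k`-separation is a set `X` with `λ(X) = k − 1`, `|X| ≥ k` and `|E − X| ≥ k`. -/
def ThreeConnected (M : Matroid α) : Prop :=
  ∀ k : ℕ, 0 < k → k < 3 → ∀ X ⊆ M.E,
    ¬ (lam M X = (k : ℤ) - 1 ∧ (k : ℤ) ≤ X.ncard ∧ (k : ℤ) ≤ (M.E \ X).ncard)

/-- A detachable pair: distinct elements `e, f` such that `M \ e \ f` or
`M / e / f` is 3-connected. -/
def DetachablePair (M : Matroid α) (e f : α) : Prop :=
  e ≠ f ∧ e ∈ M.E ∧ f ∈ M.E ∧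
    (ThreeConnected (Del M {e, f}) ∨ ThreeConnected (Con M {e, f}))

/-- The triple of elements with indices `i, i+1, i+2` in an ordering. -/
def tri (e : ℕ → α) (i : ℕ) : Set α := {e i, e (i + 1), e (i + 2)}

/-- `(e 0, …, e (n-1))` is a fan ordering of length `n ≥ 3` in `M`:
consecutive triples alternate between triangles and triads. -/
def FanOrd (M : Matroid α) (n : ℕ) (e : ℕ → α) : Prop :=
  3 ≤ n ∧ Set.InjOn e (Set.Iio n) ∧ (∀ i < n, e i ∈ M.E) ∧
    (Triangle M (tri e 0) ∨ Triad M (tri e 0)) ∧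
    ∀ i, i + 3 < n →
      (Triangle M (tri e i) → Triad M (tri e (i + 1))) ∧
      (Triad M (tri e i) → Triangle M (tri e (i + 1)))

/-- A fan (as a set): either a 2-element subset of the ground set, or the
underlying set of a fan ordering of length at least 3. -/
def IsFan (M : Matroid α) (F : Set α) : Prop :=
  (F ⊆ M.E ∧ F.ncard = 2) ∨ ∃ n e, FanOrd M n e ∧ F = e '' Set.Iio n

/-- A maximal fan: a fan contained in no strictly larger fan. -/
def MaximalFan (M : Matroid α) (F : Set α) : Prop :=
  IsFan M F ∧ ∀ F', IsFan M F' → F ⊆ F' → F' = F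

/-- `M` is a wheel or a whirl: its ground set has a cyclic ordering of even size
`2n` in which consecutive triples alternate between triangles and triads. -/
def IsWheelOrWhirl (M : Matroid α) : Prop :=
  ∃ (n : ℕ) (e : ℕ → α), 2 ≤ n ∧ Set.InjOn e (Set.Iio (2 * n)) ∧
    M.E = e '' Set.Iio (2 * n) ∧
    ∀ i < 2 * n,
      (i % 2 = 0 → Triangle M {e i, e ((i + 1) % (2 * n)), e ((i + 2) % (2 * n))}) ∧
      (i % 2 = 1 → Triad M {e i, e ((i + 1) % (2 * n)), e ((i + 2) % (2 * n))})

/-- An `M(K₄)`-separator: a 6-element set `{a,b,c,x,y,z}` where `{x,y,z}` is a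
triad and `{a,b,c}`, `{a,x,y}`, `{b,x,z}`, `{c,y,z}` are triangles. -/
def MK4Sep (M : Matroid α) (S : Set α) : Prop :=
  ∃ a b c x y z : α, S = {a, b, c, x, y, z} ∧ S.ncard = 6 ∧
    Triad M {x, y, z} ∧ Triangle M {a, b, c} ∧ Triangle M {a, x, y} ∧
    Triangle M {b, x, z} ∧ Triangle M {c, y, z}

/-- A vertical 3-separation `(X, {e}, Y)` of `M`. -/
def VertThreeSep (M : Matroid α) (X : Set α) (e : α) (Y : Set α) : Prop :=
  X ∪ {e} ∪ Y = M.E ∧ Disjoint X Y ∧ e ∉ X ∧ e ∉ Y ∧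
    lam M X = 2 ∧ lam M Y = 2 ∧ e ∈ M.closure X ∧ e ∈ M.closure Y ∧
    3 ≤ r M X ∧ 3 ≤ r M Y

/-- `N` is a simplification of `M`: a restriction of `M` to a set of
representatives, one from each parallel class of nonloops. -/
def SimplificationOf (M N : Matroid α) : Prop :=
  ∃ X : Set α, (∀ x ∈ X, x ∈ M.E ∧ x ∉ M.closure ∅) ∧ N = M ↾ X ∧
    ∀ y ∈ M.E, y ∉ M.closure ∅ →
      ∃! x, x ∈ X ∧ M.closure {y} = M.closure {x}

lemma circuit_iff_isCircuit {M : Matroid α} {C : Set α} : Circuit M C ↔ M.IsCircuit C := by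
  rw [isCircuit_iff_forall_ssubset, Dep]
  exact ⟨fun ⟨hE, hC, h⟩ => ⟨⟨hC, hE⟩, fun I hI => h I hI⟩,
    fun ⟨⟨hC, hE⟩, h⟩ => ⟨hE, hC, fun I hI => h hI⟩⟩

lemma cocircuit_iff_isCocircuit {M : Matroid α} {C : Set α} :
    Cocircuit M C ↔ M.IsCocircuit C :=
  circuit_iff_isCircuit

lemma r_restrict (M : Matroid α) {R X : Set α} (hX : X ⊆ R) : r (M ↾ R) X = r M X := by
  have hset : {I | (M ↾ R).Indep I ∧ I ⊆ X} = {I | M.Indep I ∧ I ⊆ X} := by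
    ext I
    simp only [mem_ofPred_eq, restrict_indep_iff]
    exact ⟨fun h => ⟨h.1.1, h.2⟩, fun h => ⟨⟨h.1, h.2.trans hX⟩, h.2⟩⟩
  rw [r, r, hset]

lemma lam_restrict (M : Matroid α) {R X : Set α} (hX : X ⊆ R) :
    lam (M ↾ R) X = r M X + r M (R \ X) - r M R := by
  rw [lam, restrict_ground_eq, r_restrict M hX, r_restrict M sdiff_subset,
    r_restrict M Subset.rfl]

section Rank

variable {M : Matroid α} [M.Finite] {I X Y : Set α} {x : α}

lemma r_nonneg (M : Matroid α) (X : Set α) : 0 ≤ r M X := Int.natCast_nonneg _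

lemma r_eq_toNat_eRk (M : Matroid α) [M.Finite] (X : Set α) : r M X = (M.eRk X).toNat := by
  obtain ⟨I, hI⟩ := M.exists_isBasis' X
  have hmax : IsGreatest (ncard '' {J | M.Indep J ∧ J ⊆ X}) I.ncard := by
    refine ⟨⟨I, ⟨hI.indep, hI.subset⟩, rfl⟩, ?_⟩
    rintro _ ⟨J, ⟨hJ, hJX⟩, rfl⟩
    have hle : J.encard ≤ I.encard := hI.eRk_eq_encard ▸ hJ.encard_le_eRk_of_subset hJX
    exact ENat.toNat_le_toNat hle (M.set_finite I hI.indep.subset_ground).encard_lt_top.ne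
  rw [r, hmax.csSup_eq, hI.eRk_eq_encard, ncard_def]

lemma eRk_eq_toNat_r (M : Matroid α) [M.Finite] (X : Set α) : M.eRk X = (r M X).toNat := by
  rw [r_eq_toNat_eRk, Int.toNat_natCast,
    ENat.natCast_toNat (M.isRkFinite_set X).eRk_lt_top.ne]

lemma r_mono (h : X ⊆ Y) : r M X ≤ r M Y := by
  have h' := M.eRk_mono h
  rw [eRk_eq_toNat_r, eRk_eq_toNat_r] at h'
  have := r_nonneg M X
  have := r_nonneg M Y
  norm_cast at h'
  omega

lemma r_union_le : r M (X ∪ Y) ≤ r M X + r M Y := by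
  have h := M.eRk_union_le_eRk_add_eRk X Y
  rw [eRk_eq_toNat_r, eRk_eq_toNat_r, eRk_eq_toNat_r] at h
  have := r_nonneg M (X ∪ Y)
  have := r_nonneg M X
  have := r_nonneg M Y
  norm_cast at h
  omega

lemma r_le_ncard (hX : X.Finite) : r M X ≤ X.ncard := by
  have h := M.eRk_le_encard X
  rw [eRk_eq_toNat_r, ← hX.cast_ncard_eq] at h
  have := r_nonneg M X
  norm_cast at h
  omega

lemma r_insert_le : r M (insert x X) ≤ r M X + 1 := by
  rw [← singleton_union, union_comm]
  exact r_union_le.trans (by have := r_le_ncard (M := M) (finite_singleton x); simp_all)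

lemma r_union_eq_of_subset_closure (h : Y ⊆ M.closure X) : r M (X ∪ Y) = r M X := by
  have hle : M.eRk (X ∪ Y) ≤ M.eRk X := by
    calc M.eRk (X ∪ Y) ≤ M.eRk (X ∪ M.closure X) := M.eRk_mono (union_subset_union_right X h)
    _ = M.eRk X := by rw [eRk_union_closure_right_eq, union_self]
  rw [eRk_eq_toNat_r, eRk_eq_toNat_r] at hle
  have := r_mono (M := M) (subset_union_left (s := X) (t := Y))
  have := r_nonneg M X
  norm_cast at hle
  omega

lemma r_insert_of_notMem_closure (hx : x ∈ M.E \ M.closure X) :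
    r M (insert x X) = r M X + 1 := by
  have h := eRk_insert_eq_add_one hx
  rw [eRk_eq_toNat_r, eRk_eq_toNat_r] at h
  have := r_nonneg M X
  have := r_nonneg M (insert x X)
  norm_cast at h
  omega

lemma Indep.r_eq_ncard (hI : M.Indep I) : r M I = I.ncard := by
  rw [r_eq_toNat_eRk, hI.eRk_eq_encard, ncard_def]

lemma r_lt_r_ground_iff_not_spanning (hX : X ⊆ M.E) : r M X < r M M.E ↔ ¬ M.Spanning X := by
  rw [spanning_iff_eRk_le, ← eRk_ground, eRk_eq_toNat_r, eRk_eq_toNat_r, not_le]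
  have := r_nonneg M X
  have := r_nonneg M M.E
  norm_cast
  omega

end Rank

section Cocircuit

variable {M : Matroid α} {C D D' X : Set α}

lemma IsCocircuit.closure_compl (hD : M.IsCocircuit D) :
    M.closure (M.E \ D) = M.E \ D := by
  refine subset_antisymm (fun x hx => ⟨M.closure_subset_ground _ hx, fun hxD => ?_⟩)
    (M.subset_closure _ sdiff_subset)
  rw [isCocircuit_iff_minimal_compl_nonspanning, minimal_iff_forall_ssubset] at hD
  have hsp := not_not.1 (hD.2 (sdiff_singleton_ssubset.2 hxD))
  refine hD.1 ((spanning_iff_closure_eq sdiff_subset).2 <|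
    subset_antisymm (M.closure_subset_ground _) ?_)
  have hsub : M.E \ (D \ {x}) ⊆ M.closure (M.E \ D) := by
    rw [sdiff_sdiff_right, inter_singleton_of_mem (M.closure_subset_ground _ hx), union_singleton]
    exact insert_subset hx (M.subset_closure _ sdiff_subset)
  simpa [hsp.closure_eq] using M.closure_subset_closure_of_subset_closure hsub

lemma IsCircuit.mem_iff_mem_of_notMem {a b c : α} (hC : M.IsCircuit {a, b, c})
    (hD : M.IsCocircuit D) (hb : b ∉ D) : a ∈ D ↔ c ∈ D := by
  have key : ∀ x y, x ∈ ({a, b, c} : Set α) → y ∈ ({a, b, c} : Set α) →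
      ({a, b, c} : Set α) ∩ D ⊆ {x, y} → x ∈ D → y ∈ D := fun x y hx hy hsub hxD => by
    by_contra hyD
    refine hC.inter_isCocircuit_ne_singleton hD (subset_antisymm (fun z hz => ?_)
      (singleton_subset_iff.2 ⟨hx, hxD⟩))
    rcases hsub hz with rfl | rfl
    exacts [rfl, absurd hz.2 hyD]
  have hsub : ({a, b, c} : Set α) ∩ D ⊆ {a, c} := by
    rintro z ⟨hz, hzD⟩
    rcases hz with rfl | rfl | rfl
    exacts [mem_insert _ _, absurd hzD hb, mem_insert_of_mem _ rfl]
  exact ⟨key a c (by simp) (by simp) hsub,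
    key c a (by simp) (by simp) (hsub.trans (pair_comm a c).subset)⟩

variable [M.Finite]

lemma IsCircuit.r_add_one_eq (hC : M.IsCircuit C) : r M C + 1 = C.ncard := by
  have h := hC.eRk_add_one_eq
  rw [eRk_eq_toNat_r, ← (M.set_finite C hC.subset_ground).cast_ncard_eq] at h
  have := r_nonneg M C
  norm_cast at h
  omega

lemma IsCocircuit.r_compl_add_one_eq (hD : M.IsCocircuit D) :
    r M (M.E \ D) + 1 = r M M.E := by
  obtain ⟨x, hx⟩ := hD.nonempty
  have hxcl : x ∈ M.E \ M.closure (M.E \ D) := by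
    rw [IsCocircuit.closure_compl hD]
    exact ⟨hD.subset_ground hx, fun h => h.2 hx⟩
  have hins : M.E \ (D \ {x}) = insert x (M.E \ D) := by
    rw [sdiff_sdiff_right, inter_singleton_of_mem hxcl.1, union_singleton]
  rw [isCocircuit_iff_minimal_compl_nonspanning, minimal_iff_forall_ssubset] at hD
  have hsp := not_not.1 (hD.2 (sdiff_singleton_ssubset.2 hx))
  have hlt := (r_lt_r_ground_iff_not_spanning sdiff_subset).2 hD.1
  have hge := not_lt.1 ((r_lt_r_ground_iff_not_spanning sdiff_subset).not.2 (not_not.2 hsp))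
  rw [hins, r_insert_of_notMem_closure hxcl] at hge
  omega

lemma exists_isCocircuit_subset_of_r_lt (hX : X ⊆ M.E) (h : r M (M.E \ X) < r M M.E) :
    ∃ D, M.IsCocircuit D ∧ D ⊆ X := by
  have hnc : ¬ M.Coindep X := by
    rw [coindep_iff_compl_spanning hX]
    exact (r_lt_r_ground_iff_not_spanning sdiff_subset).1 h
  by_contra! hno
  exact hnc (coindep_iff_forall_subset_not_isCocircuit.2 ⟨fun K hKX hK => hno K hK hKX, hX⟩)

lemma r_compl_add_two_le (hD : M.IsCocircuit D) (hD' : M.IsCocircuit D') (hne : D ≠ D')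
    (hDX : D ⊆ X) (hD'X : D' ⊆ X) : r M (M.E \ X) + 2 ≤ r M M.E := by
  obtain ⟨x, hxD, hxD'⟩ : ∃ x ∈ D, x ∉ D' := by
    by_contra! h
    exact hne (hD.isCircuit.eq_of_subset_isCircuit hD'.isCircuit h)
  have hxcl : x ∈ M.E \ M.closure (M.E \ X) := by
    refine ⟨hD.subset_ground hxD, fun hx => ?_⟩
    have := M.closure_subset_closure (sdiff_subset_sdiff_right hDX) hx
    rw [IsCocircuit.closure_compl hD] at this
    exact this.2 hxD
  have hsub : insert x (M.E \ X) ⊆ M.E \ D' :=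
    insert_subset ⟨hxcl.1, hxD'⟩ (sdiff_subset_sdiff_right hD'X)
  have := r_mono (M := M) hsub
  rw [r_insert_of_notMem_closure hxcl] at this
  have := IsCocircuit.r_compl_add_one_eq hD'
  omega

end Cocircuit

section Connectivity

variable {M N : Matroid α} {C D I R S X Y Z : Set α} {d x : α}

lemma lam_compl (hX : X ⊆ M.E) : lam M (M.E \ X) = lam M X := by
  rw [lam, lam, sdiff_sdiff_cancel_left hX]
  ring

lemma exists_separation_mem_of_not_threeConnected (h : ¬ ThreeConnected N) (hx : x ∈ N.E) :
    ∃ S ⊆ N.E, x ∈ S ∧ lam N S ≤ 1 ∧ lam N S < S.ncard ∧ lam N S < (N.E \ S).ncard := by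
  simp only [ThreeConnected, not_forall, not_not] at h
  obtain ⟨k, hk0, hk3, X, hXE, hlam, hX, hXc⟩ := h
  by_cases hxX : x ∈ X
  · exact ⟨X, hXE, hxX, by omega, by omega, by omega⟩
  · refine ⟨N.E \ X, sdiff_subset, ⟨hx, hxX⟩, ?_⟩
    rw [lam_compl hXE, sdiff_sdiff_cancel_left hXE]
    omega

variable [M.Finite]

lemma lam_nonneg : 0 ≤ lam M X := by
  have h := r_mono (M := M) (subset_union_right (s := X) (t := M.E))
  rw [← union_sdiff_self] at h
  have := r_union_le (M := M) (X := X) (Y := M.E \ X)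
  rw [lam]
  omega

lemma ThreeConnected.min_le_lam (hM : ThreeConnected M) (hX : X ⊆ M.E) :
    min (min (X.ncard : ℤ) (M.E \ X).ncard) 2 ≤ lam M X := by
  by_contra! hlt
  have h0 : 0 ≤ lam M X := lam_nonneg
  obtain h | h : lam M X = 0 ∨ lam M X = 1 := by omega
  · exact hM 1 one_pos (by norm_num) X hX ⟨by rw [h]; norm_num, by omega, by omega⟩
  · exact hM 2 two_pos (by norm_num) X hX ⟨by rw [h]; norm_num, by omega, by omega⟩

lemma ThreeConnected.three_le_ncard_of_lam_lt (hM : ThreeConnected M) (hE : 4 ≤ M.E.ncard)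
    (hX : X ⊆ M.E) (hlam : lam M X < X.ncard) : 3 ≤ X.ncard := by
  have h := hM.min_le_lam hX
  have hc := ncard_sdiff hX (M.ground_finite.subset hX)
  have := ncard_le_ncard hX M.ground_finite
  omega

lemma lam_add_one_le_of_isCircuit (hC : M.IsCircuit C) : lam M C + 1 ≤ C.ncard := by
  have := IsCircuit.r_add_one_eq hC
  have := r_mono (M := M) (sdiff_subset : M.E \ C ⊆ M.E)
  rw [lam]
  omega

lemma lam_add_one_le_of_isCocircuit (hD : M.IsCocircuit D) : lam M D + 1 ≤ D.ncard := by
  have := IsCocircuit.r_compl_add_one_eq hD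
  have := r_le_ncard (M := M) (M.ground_finite.subset hD.subset_ground)
  rw [lam]
  omega

lemma ThreeConnected.three_le_ncard_of_isCircuit (hM : ThreeConnected M)
    (hE : 4 ≤ M.E.ncard) (hC : M.IsCircuit C) : 3 ≤ C.ncard :=
  hM.three_le_ncard_of_lam_lt hE hC.subset_ground (by linarith [lam_add_one_le_of_isCircuit hC])

lemma ThreeConnected.three_le_ncard_of_isCocircuit (hM : ThreeConnected M)
    (hE : 4 ≤ M.E.ncard) (hD : M.IsCocircuit D) : 3 ≤ D.ncard :=
  hM.three_le_ncard_of_lam_lt hE hD.subset_ground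
    (by linarith [lam_add_one_le_of_isCocircuit hD])

lemma ThreeConnected.indep_of_ncard_le_two (hM : ThreeConnected M) (hE : 4 ≤ M.E.ncard)
    (hI : I ⊆ M.E) (h2 : I.ncard ≤ 2) : M.Indep I := by
  by_contra hdep
  obtain ⟨C, hCI, hC⟩ := Dep.exists_isCircuit_subset ⟨hdep, hI⟩
  have := hM.three_le_ncard_of_isCircuit hE hC
  have := ncard_le_ncard hCI (M.ground_finite.subset hI)
  omega

lemma ThreeConnected.not_triangle_of_triad (hM : ThreeConnected M) (hE : 5 ≤ M.E.ncard)
    (hS : Triad M S) : ¬ Triangle M S := fun hS' => by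
  have hSE := hS'.1.1
  have := IsCircuit.r_add_one_eq (circuit_iff_isCircuit.1 hS'.1)
  have := IsCocircuit.r_compl_add_one_eq (cocircuit_iff_isCocircuit.1 hS.1)
  have h := hM.min_le_lam hSE
  have hc := ncard_sdiff hSE (M.ground_finite.subset hSE)
  have := ncard_le_ncard hSE M.ground_finite
  rw [lam] at h
  rw [hS.2] at *
  omega

lemma lam_delete_eq (hZ : Z ⊆ M.E \ Y) (hY : Y ⊆ M.closure Z) :
    lam (Del M Y) Z = lam M (Z ∪ Y) := by
  have hYE : Y ⊆ M.E := hY.trans (M.closure_subset_ground Z)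
  have hEY : r M M.E = r M (M.E \ Y) := by
    conv_lhs => rw [← sdiff_union_of_subset hYE]
    exact r_union_eq_of_subset_closure (hY.trans (M.closure_subset_closure hZ))
  rw [Del, lam_restrict M hZ, lam, r_union_eq_of_subset_closure hY, hEY, sdiff_sdiff,
    union_comm]

lemma lam_restrict_insert_le (hR : R ⊆ M.E) (hD : M.IsCocircuit D) (hdD : d ∈ D)
    (hdR : d ∈ R) (hZ : Z ⊆ R) (hdZ : d ∉ Z) (hDZ : D ⊆ insert d Z) :
    lam (M ↾ R) (insert d Z) ≤ lam (M ↾ R) Z := by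
  rw [lam_restrict M (insert_subset hdR hZ), lam_restrict M hZ]
  have hsplit : R \ Z = insert d (R \ insert d Z) := by
    ext z
    by_cases hz : z = d <;> simp [hz, hdR, hdZ]
  have hd : d ∈ M.E \ M.closure (R \ insert d Z) := by
    refine ⟨hD.subset_ground hdD, fun hcl => ?_⟩
    have hsub : R \ insert d Z ⊆ M.E \ D := fun z hz => ⟨hR hz.1, fun hzD => hz.2 (hDZ hzD)⟩
    have := M.closure_subset_closure hsub hcl
    rw [IsCocircuit.closure_compl hD] at this
    exact this.2 hdD
  have := r_insert_le (M := M) (X := Z) (x := d)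
  rw [hsplit, r_insert_of_notMem_closure hd]
  omega

end Connectivity

section Fan

variable {M : Matroid α} {n : ℕ} {x : ℕ → α}

lemma fanOrd_of_alternating (hn : 3 ≤ n) (hinj : InjOn x (Iio n)) (hxE : ∀ i < n, x i ∈ M.E)
    (hexcl : ∀ S, Triad M S → ¬ Triangle M S)
    (htri : ∀ i, i + 2 < n → Even i → Triangle M (tri x i))
    (htriad : ∀ i, i + 2 < n → ¬ Even i → Triad M (tri x i)) : FanOrd M n x := by
  refine ⟨hn, hinj, hxE, Or.inl (htri 0 (by omega) (by decide)),
    fun i hi => ⟨fun h => ?_, fun h => ?_⟩⟩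
  · by_cases hi2 : Even i
    · exact htriad (i + 1) (by omega) (Nat.even_add_one.not.2 (not_not.2 hi2))
    · exact absurd h (hexcl _ (htriad i (by omega) hi2))
  · by_cases hi2 : Even i
    · exact absurd (htri i (by omega) hi2) (hexcl _ h)
    · exact htri (i + 1) (by omega) (Nat.even_add_one.2 hi2)

lemma injOn_getD_of_nodup {l : List α} (hl : l.Nodup) (d : α) :
    InjOn (fun i => l.getD i d) (Iio l.length) := by
  intro i hi j hj hij
  simp only [mem_Iio] at hi hj
  simp only [List.getD_eq_getElem _ _ hi, List.getD_eq_getElem _ _ hj] at hij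
  exact hl.getElem_inj_iff.1 hij

structure IsFan5 (M : Matroid α) (e₀ e₁ e₂ e₃ e₄ : α) : Prop where
  nodup : [e₀, e₁, e₂, e₃, e₄].Nodup
  isCircuit_left : M.IsCircuit {e₀, e₁, e₂}
  isCocircuit_mid : M.IsCocircuit {e₁, e₂, e₃}
  isCircuit_right : M.IsCircuit {e₂, e₃, e₄}

variable {e₀ e₁ e₂ e₃ e₄ : α} {D Z : Set α}

lemma IsFan5.reverse (hF : IsFan5 M e₀ e₁ e₂ e₃ e₄) : IsFan5 M e₄ e₃ e₂ e₁ e₀ where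
  nodup := List.nodup_reverse.2 hF.nodup
  isCircuit_left := by
    convert hF.isCircuit_right using 1
    ext; simp only [mem_insert_iff, mem_singleton_iff]; tauto
  isCocircuit_mid := by
    convert hF.isCocircuit_mid using 1
    ext; simp only [mem_insert_iff, mem_singleton_iff]; tauto
  isCircuit_right := by
    convert hF.isCircuit_left using 1
    ext; simp only [mem_insert_iff, mem_singleton_iff]; tauto

lemma IsFan5.distinct (hF : IsFan5 M e₀ e₁ e₂ e₃ e₄) :
    (e₀ ≠ e₁ ∧ e₀ ≠ e₂ ∧ e₀ ≠ e₃ ∧ e₀ ≠ e₄) ∧ (e₁ ≠ e₂ ∧ e₁ ≠ e₃ ∧ e₁ ≠ e₄) ∧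
      (e₂ ≠ e₃ ∧ e₂ ≠ e₄) ∧ e₃ ≠ e₄ := by
  simpa using hF.nodup

lemma IsFan5.subset_ground (hF : IsFan5 M e₀ e₁ e₂ e₃ e₄) :
    ({e₀, e₁, e₂, e₃, e₄} : Set α) ⊆ M.E := by
  have hA := hF.isCircuit_left.subset_ground
  have hB := hF.isCircuit_right.subset_ground
  simp only [insert_subset_iff, singleton_subset_iff] at hA hB ⊢
  tauto

lemma IsFan5.ncard_eq (hF : IsFan5 M e₀ e₁ e₂ e₃ e₄) :
    ({e₀, e₁, e₂, e₃, e₄} : Set α).ncard = 5 := by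
  classical
  rw [show ({e₀, e₁, e₂, e₃, e₄} : Set α) = ↑([e₀, e₁, e₂, e₃, e₄].toFinset) by ext; simp,
    ncard_coe_finset, List.toFinset_card_of_nodup hF.nodup]
  rfl

lemma IsFan5.pair_subset_closure (hF : IsFan5 M e₀ e₁ e₂ e₃ e₄) (hZ : {e₁, e₂, e₃} ⊆ Z) :
    {e₀, e₄} ⊆ M.closure Z := by
  refine pair_subset (M.closure_subset_closure ?_
    (hF.isCircuit_left.mem_closure_sdiff_singleton_of_mem (e := e₀) (by simp)))
    (M.closure_subset_closure ?_
    (hF.isCircuit_right.mem_closure_sdiff_singleton_of_mem (e := e₄) (by simp)))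
  all_goals
    refine fun y hy => hZ ?_
    simp only [mem_sdiff, mem_insert_iff, mem_singleton_iff] at hy ⊢
    tauto

lemma IsFan5.triad_subset (hF : IsFan5 M e₀ e₁ e₂ e₃ e₄) :
    ({e₁, e₂, e₃} : Set α) ⊆ M.E \ {e₀, e₄} := by
  have := hF.distinct
  have := hF.subset_ground
  simp only [insert_subset_iff, singleton_subset_iff, mem_sdiff, mem_insert_iff,
    mem_singleton_iff] at *
  tauto

variable [M.Finite]

lemma IsFan5.eq_mid_of_isCocircuit_subset (hF : IsFan5 M e₀ e₁ e₂ e₃ e₄) (hM : ThreeConnected M)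
    (hE : 7 ≤ M.E.ncard) (hD : M.IsCocircuit D) (hDF : D ⊆ {e₀, e₁, e₂, e₃, e₄}) :
    D = {e₁, e₂, e₃} := by
  by_contra hne
  have hTF : ({e₁, e₂, e₃} : Set α) ⊆ {e₀, e₁, e₂, e₃, e₄} := by
    simp only [insert_subset_iff, mem_insert_iff, mem_singleton_iff]; tauto
  have hcorank := r_compl_add_two_le hD hF.isCocircuit_mid hne hDF hTF
  have hFT : ({e₀, e₁, e₂, e₃, e₄} : Set α) ⊆ {e₁, e₂, e₃} ∪ {e₀, e₄} := by
    simp only [insert_subset_iff, mem_union, mem_insert_iff, mem_singleton_iff]; tauto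
  have hrF := r_mono (M := M) hFT
  rw [r_union_eq_of_subset_closure (hF.pair_subset_closure Subset.rfl)] at hrF
  have hrT := r_le_ncard (M := M) (X := {e₁, e₂, e₃}) (toFinite _)
  have hT3 := ncard_insert_le e₁ {e₂, e₃}
  have hT2 := ncard_insert_le e₂ {e₃}
  have hlam := hM.min_le_lam hF.subset_ground
  have hc := ncard_sdiff hF.subset_ground
  have := ncard_le_ncard hF.subset_ground M.ground_finite
  rw [hF.ncard_eq, ncard_singleton] at *
  rw [lam] at hlam
  omega

end Fan

section Deletion

variable {M : Matroid α} [M.Finite] {e₀ e₁ e₂ e₃ e₄ t : α} {Q S Y Z : Set α}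

lemma exists_isCocircuit_subset_union (hY : Y ⊆ M.E) (hQ : Q ⊆ M.E \ Y) (hI : M.Indep Q)
    (hlam : lam (Del M Y) Q < Q.ncard) : ∃ D, M.IsCocircuit D ∧ D ⊆ Q ∪ Y := by
  rw [Del, lam_restrict M hQ, Indep.r_eq_ncard hI] at hlam
  refine exists_isCocircuit_subset_of_r_lt (union_subset (hQ.trans sdiff_subset) hY) ?_
  have := r_mono (M := M) (sdiff_subset : M.E \ Y ⊆ M.E)
  rw [union_comm, ← sdiff_sdiff]
  omega

lemma IsFan5.min_le_lam_delete (hF : IsFan5 M e₀ e₁ e₂ e₃ e₄) (hM : ThreeConnected M)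
    (hZ : Z ⊆ M.E \ {e₀, e₄}) (hTZ : {e₁, e₂, e₃} ⊆ Z) :
    min (((M.E \ {e₀, e₄}) \ Z).ncard : ℤ) 2 ≤ lam (Del M {e₀, e₄}) Z := by
  have h04E : ({e₀, e₄} : Set α) ⊆ M.E :=
    (pair_subset (by simp) (by simp)).trans hF.subset_ground
  have h2 : 2 ≤ (Z ∪ {e₀, e₄}).ncard := by
    rw [← ncard_pair hF.distinct.1.2.2.2]
    exact ncard_le_ncard subset_union_right (M.ground_finite.subset (union_subset
      (hZ.trans sdiff_subset) h04E))
  have hlam := hM.min_le_lam (union_subset (hZ.trans sdiff_subset) h04E)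
  rw [show M.E \ (Z ∪ {e₀, e₄}) = (M.E \ {e₀, e₄}) \ Z by rw [Set.sdiff_sdiff, union_comm]]
    at hlam
  rw [lam_delete_eq hZ (hF.pair_subset_closure hTZ)]
  omega

lemma IsFan5.notMem_and_ncard_compl_le_two (hF : IsFan5 M e₀ e₁ e₂ e₃ e₄) (hM : ThreeConnected M)
    (hS : S ⊆ M.E \ {e₀, e₄}) (hlam : lam (Del M {e₀, e₄}) S ≤ 1)
    (hlamc : lam (Del M {e₀, e₄}) S < ((M.E \ {e₀, e₄}) \ S).ncard)
    (ht : t ∈ ({e₁, e₂, e₃} : Set α)) (hTS : {e₁, e₂, e₃} ⊆ insert t S) :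
    t ∉ S ∧ ((M.E \ {e₀, e₄}) \ S).ncard ≤ 2 := by
  have hTE := hF.triad_subset
  by_cases htS : t ∈ S
  · rw [insert_eq_of_mem htS] at hTS
    have := hF.min_le_lam_delete hM hS hTS
    omega
  refine ⟨htS, ?_⟩
  have hmono := lam_restrict_insert_le sdiff_subset hF.isCocircuit_mid ht (hTE ht) hS htS hTS
  have hmin := hF.min_le_lam_delete hM (insert_subset (hTE ht) hS) hTS
  have hc := ncard_sdiff_singleton_add_one (s := (M.E \ {e₀, e₄}) \ S) ⟨hTE ht, htS⟩
    (M.ground_finite.subset (sdiff_subset.trans sdiff_subset))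
  rw [Set.sdiff_sdiff, union_singleton] at hc
  simp only [Del] at *
  omega

lemma IsFan5.exists_small_side (hF : IsFan5 M e₀ e₁ e₂ e₃ e₄) (hM : ThreeConnected M)
    (hdel : ¬ ThreeConnected (Del M {e₀, e₄})) :
    ∃ Q ⊆ M.E \ {e₀, e₄}, Q.ncard ≤ 2 ∧ lam (Del M {e₀, e₄}) Q < Q.ncard ∧
      (e₁ ∉ Q ∧ e₂ ∉ Q ∧ e₃ ∈ Q ∨ e₁ ∉ Q ∧ e₂ ∈ Q ∧ e₃ ∉ Q ∨ e₁ ∈ Q ∧ e₂ ∉ Q ∧ e₃ ∉ Q) := by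
  have hT := hF.triad_subset
  simp only [insert_subset_iff, singleton_subset_iff] at hT
  obtain ⟨P, hP, h2P, hlam1, hlamP, hlamQ⟩ :=
    exists_separation_mem_of_not_threeConnected hdel hT.2.1
  change P ⊆ M.E \ {e₀, e₄} at hP
  change lam _ P < ((M.E \ {e₀, e₄}) \ P).ncard at hlamQ
  have hlamc : lam (Del M {e₀, e₄}) ((M.E \ {e₀, e₄}) \ P) = lam (Del M {e₀, e₄}) P :=
    lam_compl hP
  by_cases h1 : e₁ ∈ P <;> by_cases h3 : e₃ ∈ P
  · refine absurd h1 (hF.notMem_and_ncard_compl_le_two hM hP hlam1 hlamQ (t := e₁) (by simp) ?_).1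
    simp [insert_subset_iff, h1, h2P, h3]
  · obtain ⟨-, hc⟩ := hF.notMem_and_ncard_compl_le_two hM hP hlam1 hlamQ (t := e₃) (by simp)
      (by simp [insert_subset_iff, h1, h2P])
    exact ⟨_, sdiff_subset, hc, by rwa [hlamc],
      Or.inl ⟨fun h => h.2 h1, fun h => h.2 h2P, hT.2.2, h3⟩⟩
  · obtain ⟨-, hc⟩ := hF.notMem_and_ncard_compl_le_two hM hP hlam1 hlamQ (t := e₁) (by simp)
      (by simp [insert_subset_iff, h2P, h3])
    exact ⟨_, sdiff_subset, hc, by rwa [hlamc],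
      Or.inr (Or.inr ⟨⟨hT.1, h1⟩, fun h => h.2 h2P, fun h => h.2 h3⟩)⟩
  · obtain ⟨-, hc⟩ := hF.notMem_and_ncard_compl_le_two hM sdiff_subset (hlamc ▸ hlam1)
      (by rwa [hlamc, sdiff_sdiff_cancel_left hP]) (t := e₂) (by simp)
      (by simp [insert_subset_iff, hT.1, hT.2.2, h1, h3])
    rw [sdiff_sdiff_cancel_left hP] at hc
    exact ⟨P, hP, hc, hlamP, Or.inr (Or.inl ⟨h1, h2P, h3⟩)⟩

end Deletion

section Cases

variable {M : Matroid α} [M.Finite] {e₀ e₁ e₂ e₃ e₄ : α} {D Q : Set α}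

lemma IsFan5.exists_eq_triad_of_isCocircuit_subset (hF : IsFan5 M e₀ e₁ e₂ e₃ e₄)
    (hM : ThreeConnected M) (hE : 4 ≤ M.E.ncard) (hQ : Q ⊆ M.E \ {e₀, e₄})
    (hQ2 : Q.ncard ≤ 2) (h1 : e₁ ∉ Q) (h2 : e₂ ∉ Q) (h3 : e₃ ∈ Q) (hD : M.IsCocircuit D)
    (hDQ : D ⊆ Q ∪ {e₀, e₄}) : ∃ w ∈ M.E \ {e₀, e₁, e₂, e₃, e₄}, D = {e₃, e₄, w} := by
  obtain ⟨⟨h01, h02, -, h04⟩, ⟨-, -, h14⟩, ⟨-, h24⟩, -⟩ := hF.distinct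
  have h0D : e₀ ∉ D := fun h => by
    have h1D : e₁ ∉ D := fun h1D => by rcases hDQ h1D with h | h | h <;> tauto
    rcases hDQ ((IsCircuit.mem_iff_mem_of_notMem hF.isCircuit_left hD h1D).1 h) with h | h | h <;>
      tauto
  have hDsub : D ⊆ insert e₄ Q := fun y hy => by
    rcases hDQ hy with hyQ | rfl | rfl
    exacts [mem_insert_of_mem _ hyQ, absurd hy h0D, mem_insert _ _]
  have hQfin : Q.Finite := M.ground_finite.subset (hQ.trans sdiff_subset)
  have hD3 := hM.three_le_ncard_of_isCocircuit hE hD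
  have hle := ncard_le_ncard hDsub (hQfin.insert e₄)
  have hins := ncard_insert_le e₄ Q
  obtain ⟨w, hw⟩ : ∃ w, Q \ {e₃} = {w} :=
    ncard_eq_one.1 (by have := ncard_sdiff_singleton_add_one h3 hQfin; omega)
  have hwQ : w ∈ Q \ {e₃} := hw ▸ rfl
  have hQw : Q = {e₃, w} := by rw [← hw, insert_sdiff_singleton, insert_eq_of_mem h3]
  refine ⟨w, ⟨(hQ hwQ.1).1, ?_⟩, ?_⟩
  · have hw04 := (hQ hwQ.1).2
    have hw3 := hwQ.2
    simp only [mem_insert_iff, mem_singleton_iff] at hw04 hw3 ⊢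
    rintro (rfl | rfl | rfl | rfl | rfl)
    exacts [hw04 (Or.inl rfl), h1 hwQ.1, h2 hwQ.1, hw3 rfl, hw04 (Or.inr rfl)]
  · rw [eq_of_subset_of_ncard_le hDsub (by omega) (hQfin.insert e₄), hQw, insert_comm]

lemma IsFan5.exists_eq_of_isCocircuit_subset (hF : IsFan5 M e₀ e₁ e₂ e₃ e₄)
    (hM : ThreeConnected M) (hE : 7 ≤ M.E.ncard) (hQ : Q ⊆ M.E \ {e₀, e₄})
    (hQ2 : Q.ncard ≤ 2) (h1 : e₁ ∉ Q) (h3 : e₃ ∉ Q) (hD : M.IsCocircuit D)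
    (hDQ : D ⊆ Q ∪ {e₀, e₄}) : ∃ z ∈ M.E \ {e₀, e₁, e₂, e₃, e₄}, D = {e₀, e₂, e₄, z} := by
  obtain ⟨⟨h01, h02, h03, h04⟩, ⟨h12, h13, h14⟩, ⟨h23, h24⟩, h34⟩ := hF.distinct
  have hnot : ∀ y ∈ D, y ∉ Q → y = e₀ ∨ y = e₄ := fun y hy hyQ => by
    simpa using (hDQ hy).resolve_left hyQ
  have h1D : e₁ ∉ D := fun h => by rcases hnot _ h h1 with h | h <;> tauto
  have h3D : e₃ ∉ D := fun h => by rcases hnot _ h h3 with h | h <;> tauto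
  have hQfin : Q.Finite := M.ground_finite.subset (hQ.trans sdiff_subset)
  have hD3 := hM.three_le_ncard_of_isCocircuit (by omega) hD
  have hA := IsCircuit.mem_iff_mem_of_notMem hF.isCircuit_left hD h1D
  have hB := IsCircuit.mem_iff_mem_of_notMem hF.isCircuit_right hD h3D
  have h2D : e₂ ∈ D := by
    by_contra h2D
    have hDQ' : D ⊆ Q := fun y hy => by
      by_contra hyQ
      rcases hnot y hy hyQ with rfl | rfl
      exacts [h2D (hA.1 hy), h2D (hB.2 hy)]
    have := ncard_le_ncard hDQ' hQfin
    omega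
  obtain ⟨z, hzD, hzF⟩ : ∃ z ∈ D, z ∉ ({e₀, e₁, e₂, e₃, e₄} : Set α) := by
    by_contra! h
    exact h1D (hF.eq_mid_of_isCocircuit_subset hM hE hD h ▸ by simp)
  have hzQ : z ∈ Q := by_contra fun hzQ => hzF (by rcases hnot z hzD hzQ with rfl | rfl <;> simp)
  have h2Q : e₂ ∈ Q := by_contra fun h2Q => by rcases hnot _ h2D h2Q with h | h <;> tauto
  have hz2 : e₂ ≠ z := by rintro rfl; simp at hzF
  have hQeq : Q = {e₂, z} := (eq_of_subset_of_ncard_le (pair_subset h2Q hzQ)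
    (by rw [ncard_pair hz2]; omega) hQfin).symm
  refine ⟨z, ⟨(hQ hzQ).1, hzF⟩, subset_antisymm (fun y hy => ?_) ?_⟩
  · have := hDQ hy
    rw [hQeq] at this
    simp only [mem_union, mem_insert_iff, mem_singleton_iff] at this ⊢
    tauto
  · simp only [insert_subset_iff, singleton_subset_iff]
    exact ⟨hA.2 h2D, h2D, hB.1 h2D, hzD⟩

end Cases

section Maximal

variable {M : Matroid α} [M.Finite] {e₀ e₁ e₂ e₃ e₄ w : α}

lemma IsFan5.fanOrd_append (hF : IsFan5 M e₀ e₁ e₂ e₃ e₄) (hM : ThreeConnected M)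
    (hE : 5 ≤ M.E.ncard) (hw : w ∈ M.E \ {e₀, e₁, e₂, e₃, e₄})
    (hD : M.IsCocircuit {e₃, e₄, w}) :
    FanOrd M 6 (fun i => [e₀, e₁, e₂, e₃, e₄, w].getD i w) := by
  obtain ⟨⟨h01, h02, h03, h04⟩, ⟨h12, h13, h14⟩, ⟨h23, h24⟩, h34⟩ := hF.distinct
  have hwF : w ≠ e₀ ∧ w ≠ e₁ ∧ w ≠ e₂ ∧ w ≠ e₃ ∧ w ≠ e₄ := by simpa using hw.2
  have hl : [e₀, e₁, e₂, e₃, e₄, w].Nodup := by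
    simp only [List.nodup_cons, List.mem_cons, List.not_mem_nil, or_false, List.nodup_nil]
    tauto
  have hFE := hF.subset_ground
  simp only [insert_subset_iff, singleton_subset_iff] at hFE
  refine fanOrd_of_alternating (by norm_num) (injOn_getD_of_nodup hl w) (fun i hi => ?_)
    (fun S hS => hM.not_triangle_of_triad hE hS) (fun i hi he => ?_) (fun i hi he => ?_)
  · interval_cases i
    exacts [hFE.1, hFE.2.1, hFE.2.2.1, hFE.2.2.2.1, hFE.2.2.2.2, hw.1]
  · replace hi : i < 4 := by omega
    interval_cases i
    · exact ⟨circuit_iff_isCircuit.2 hF.isCircuit_left,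
        ncard_eq_three.2 ⟨_, _, _, h01, h02, h12, rfl⟩⟩
    · exact absurd he (by decide)
    · exact ⟨circuit_iff_isCircuit.2 hF.isCircuit_right,
        ncard_eq_three.2 ⟨_, _, _, h23, h24, h34, rfl⟩⟩
    · exact absurd he (by decide)
  · replace hi : i < 4 := by omega
    interval_cases i
    · exact absurd he (by decide)
    · exact ⟨cocircuit_iff_isCocircuit.2 hF.isCocircuit_mid,
        ncard_eq_three.2 ⟨_, _, _, h12, h13, h23, rfl⟩⟩
    · exact absurd he (by decide)
    · exact ⟨cocircuit_iff_isCocircuit.2 hD,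
        ncard_eq_three.2 ⟨_, _, _, h34, hwF.2.2.2.1.symm, hwF.2.2.2.2.symm, rfl⟩⟩

lemma IsFan5.not_isCocircuit_of_maximalFan (hF : IsFan5 M e₀ e₁ e₂ e₃ e₄)
    (hM : ThreeConnected M) (hE : 5 ≤ M.E.ncard) (hmax : MaximalFan M {e₀, e₁, e₂, e₃, e₄})
    (hw : w ∈ M.E \ {e₀, e₁, e₂, e₃, e₄}) : ¬ M.IsCocircuit {e₃, e₄, w} := fun hD => by
  have hsub : {e₀, e₁, e₂, e₃, e₄} ⊆ (fun i => [e₀, e₁, e₂, e₃, e₄, w].getD i w) '' Iio 6 := by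
    simp only [insert_subset_iff, singleton_subset_iff]
    exact ⟨⟨0, by simp, rfl⟩, ⟨1, by simp, rfl⟩, ⟨2, by simp, rfl⟩, ⟨3, by simp, rfl⟩,
      ⟨4, by simp, rfl⟩⟩
  have hext := hmax.2 _ (Or.inr ⟨6, _, hF.fanOrd_append hM hE hw hD, rfl⟩) hsub
  exact hw.2 (hext ▸ ⟨5, by simp, rfl⟩)

end Maximal

lemma isFan5_of_fanOrd {M : Matroid α} {e : ℕ → α} (hord : FanOrd M 5 e)
    (htri : Triangle M {e 0, e 1, e 2}) : IsFan5 M (e 0) (e 1) (e 2) (e 3) (e 4) where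
  nodup := List.Nodup.map_on (fun i hi j hj hij => hord.2.1 (by simpa using hi)
    (by simpa using hj) hij) (List.nodup_range (n := 5))
  isCircuit_left := circuit_iff_isCircuit.1 htri.1
  isCocircuit_mid := cocircuit_iff_isCocircuit.1 ((hord.2.2.2.2 0 (by norm_num)).1 htri).1
  isCircuit_right := circuit_iff_isCircuit.1
    ((hord.2.2.2.2 1 (by norm_num)).2 ((hord.2.2.2.2 0 (by norm_num)).1 htri)).1

lemma image_Iio_five (e : ℕ → α) : e '' Iio 5 = {e 0, e 1, e 2, e 3, e 4} := by
  ext y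
  simp only [mem_image, mem_Iio, mem_insert_iff, mem_singleton_iff]
  constructor
  · rintro ⟨i, hi, rfl⟩
    interval_cases i <;> simp
  · rintro (rfl | rfl | rfl | rfl | rfl)
    exacts [⟨0, by norm_num, rfl⟩, ⟨1, by norm_num, rfl⟩, ⟨2, by norm_num, rfl⟩,
      ⟨3, by norm_num, rfl⟩, ⟨4, by norm_num, rfl⟩]

/-- In a 3-connected matroid with at least 13 elements and no detachable pair,
a maximal fan `(e 0, …, e 4)` of length 5 starting with a triangle extends to a
cocircuit `{e 0, e 2, e 4, z}` with `z` outside the fan. -/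
theorem stmt18 (M : Matroid α) [M.Finite] (hM : ThreeConnected M)
    (hE : 13 ≤ M.E.ncard) {e : ℕ → α} {F : Set α}
    (hord : FanOrd M 5 e) (hF : F = e '' Set.Iio 5) (hmax : MaximalFan M F)
    (htri : Triangle M {e 0, e 1, e 2})
    (hnd : ∀ x y, ¬ DetachablePair M x y) :
    ∃ z ∈ M.E \ F, Cocircuit M {e 0, e 2, e 4, z} := by
  have hfan := isFan5_of_fanOrd hord htri
  rw [image_Iio_five] at hF
  subst hF
  have hFE := hfan.subset_ground
  simp only [insert_subset_iff, singleton_subset_iff] at hFE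
  have hdel : ¬ ThreeConnected (Del M {e 0, e 4}) := fun h =>
    hnd (e 0) (e 4) ⟨hfan.distinct.1.2.2.2, hFE.1, hFE.2.2.2.2, Or.inl h⟩
  obtain ⟨Q, hQ, hQ2, hlam, hQT⟩ := hfan.exists_small_side hM hdel
  obtain ⟨D, hD, hDQ⟩ := exists_isCocircuit_subset_union (pair_subset hFE.1 hFE.2.2.2.2) hQ
    (hM.indep_of_ncard_le_two (by omega) (hQ.trans sdiff_subset) hQ2) hlam
  rcases hQT with ⟨h1, h2, h3⟩ | ⟨h1, -, h3⟩ | ⟨h1, h2, h3⟩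
  · obtain ⟨w, hw, rfl⟩ :=
      hfan.exists_eq_triad_of_isCocircuit_subset hM (by omega) hQ hQ2 h1 h2 h3 hD hDQ
    exact absurd hD (hfan.not_isCocircuit_of_maximalFan hM (by omega) hmax hw)
  · obtain ⟨z, hz, rfl⟩ := hfan.exists_eq_of_isCocircuit_subset hM (by omega) hQ hQ2 h1 h3 hD hDQ
    exact ⟨z, hz, cocircuit_iff_isCocircuit.2 hD⟩
  · have hrev : ({e 4, e 3, e 2, e 1, e 0} : Set α) = {e 0, e 1, e 2, e 3, e 4} := by
      ext; simp only [mem_insert_iff, mem_singleton_iff]; tauto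
    rw [pair_comm] at hQ hDQ
    obtain ⟨w, hw, rfl⟩ :=
      hfan.reverse.exists_eq_triad_of_isCocircuit_subset hM (by omega) hQ hQ2 h3 h2 h1 hD hDQ
    exact absurd hD (hfan.reverse.not_isCocircuit_of_maximalFan hM (by omega) (hrev ▸ hmax) hw)
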